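/- arXiv:2507.22957 — 2 statements merged into one kernel-verified Lean document; each statement's English description precedes it below -/
import Mathlib

section
/- Let G be a simple graph and H a dilation of G. Then the transversal number of H equals the transversal number of G, i.e., τ(H) = τ(G). -/
open Finset

/-- Two vertices of a hypergraph (given by its finite set of hyperedges) are
adjacent if they are distinct and lie in a common hyperedge. -/
def HypAdj {W : Type*} (E : Finset (Finset W)) (u v : W) : Prop :=
  u ≠ v ∧ ∃ e ∈ E, u ∈ e ∧ v ∈ e

/-- A matching of a hypergraph: a set of pairwise disjoint hyperedges. -/
def IsHypMatching {W : Type*} (E M : Finset (Finset W)) : Prop :=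
  M ⊆ E ∧ ∀ a ∈ M, ∀ b ∈ M, a ≠ b → Disjoint a b

/-- Matching number of a hypergraph. -/
noncomputable def nuH {W : Type*} (E : Finset (Finset W)) : ℕ :=
  sSup {n | ∃ M : Finset (Finset W), IsHypMatching E M ∧ M.card = n}

/-- A transversal (vertex cover) of a hypergraph: meets every hyperedge. -/
def IsTransversal {W : Type*} (E : Finset (Finset W)) (T : Finset W) : Prop :=
  ∀ e ∈ E, ∃ w ∈ T, w ∈ e

/-- Transversal number of a hypergraph. -/
noncomputable def tauH {W : Type*} (E : Finset (Finset W)) : ℕ :=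
  sInf {n | ∃ T : Finset W, IsTransversal E T ∧ T.card = n}

/-- A dominating set of a hypergraph: every vertex outside it is adjacent
(shares a hyperedge) with some vertex inside it. -/
def IsDominatingH {W : Type*} (E : Finset (Finset W)) (D : Finset W) : Prop :=
  ∀ v, v ∉ D → ∃ u ∈ D, HypAdj E u v

/-- Domination number of a hypergraph on the (finite) vertex type `W`. -/
noncomputable def gammaH {W : Type*} (E : Finset (Finset W)) : ℕ :=
  sInf {n | ∃ D : Finset W, IsDominatingH E D ∧ D.card = n}

/-- The two-element finset associated to an unordered pair. -/
noncomputable def sym2ToFinset {V : Type*} (e : Sym2 V) : Finset V := by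
  classical exact Sym2.lift ⟨fun a b => ({a, b} : Finset V), fun a b => Finset.pair_comm a b⟩ e

/-- The edges of a simple graph, viewed as the hyperedges (of size two)
of a 2-uniform hypergraph. -/
noncomputable def graphEdges {V : Type*} [Fintype V] (G : SimpleGraph V) :
    Finset (Finset V) := by
  classical exact ((Finset.univ : Finset (Sym2 V)).filter (· ∈ G.edgeSet)).image sym2ToFinset

/-- A dominating set of a simple graph. -/
def IsDominatingG {V : Type*} (G : SimpleGraph V) (D : Finset V) : Prop :=
  ∀ v, v ∉ D → ∃ u ∈ D, G.Adj u v

/-- Domination number of a simple graph. -/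
noncomputable def gammaG {V : Type*} [Fintype V] (G : SimpleGraph V) : ℕ :=
  sInf {n | ∃ D : Finset V, IsDominatingG G D ∧ D.card = n}

/-- A Berge-`G` hypergraph on vertex type `W`: an injection `i` of the vertices
of `G` and a bijection `f` from the edges of `G` to the hyperedges `EH`,
such that each edge of `G` is embedded in the corresponding hyperedge. -/
structure BergeG {V : Type*} (G : SimpleGraph V) (W : Type*) where
  EH : Finset (Finset W)
  i : V ↪ W
  f : Sym2 V → Finset W
  f_mem : ∀ ⦃e⦄, e ∈ G.edgeSet → f e ∈ EH
  f_inj : ∀ ⦃e e'⦄, e ∈ G.edgeSet → e' ∈ G.edgeSet → f e = f e' → e = e'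
  f_surj : ∀ h ∈ EH, ∃ e ∈ G.edgeSet, f e = h
  contains : ∀ ⦃u v⦄, G.Adj u v → i u ∈ f s(u, v) ∧ i v ∈ f s(u, v)

/-- A dilation of a simple graph `G`, on the vertex type `W`: each vertex `v` of `G`
is blown up to a finset `vset v` containing the support vertex `supp v`, each edge `e`
of `G` gets a (possibly empty) finset `eset e` of additional vertices, all these finsets
being pairwise disjoint and covering `W`; the hyperedge corresponding to the edge
`e = {u,v}` is `vset u ∪ vset v ∪ eset e`, and all hyperedges have size at most the
rank `k ≥ 3`. -/
structure GraphDilation {V : Type*} (G : SimpleGraph V) (W : Type*) where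
  vset : V → Finset W
  supp : V → W
  eset : Sym2 V → Finset W
  k : ℕ
  k_ge : 3 ≤ k
  supp_mem : ∀ v, supp v ∈ vset v
  vset_disj : ∀ ⦃u v : V⦄, u ≠ v → Disjoint (vset u) (vset v)
  eset_disj : ∀ ⦃e f : Sym2 V⦄, e ∈ G.edgeSet → f ∈ G.edgeSet → e ≠ f →
    Disjoint (eset e) (eset f)
  vset_eset_disj : ∀ (v : V), ∀ ⦃e : Sym2 V⦄, e ∈ G.edgeSet → Disjoint (vset v) (eset e)
  card_le : ∀ ⦃u v : V⦄, G.Adj u v →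
    (vset u).card + (vset v).card + (eset s(u, v)).card ≤ k
  cover : ∀ w : W, (∃ v : V, w ∈ vset v) ∨ (∃ e ∈ G.edgeSet, w ∈ eset e)

/-- The hyperedge of a dilation corresponding to an edge `e` of the support graph. -/
noncomputable def GraphDilation.hedge {V W : Type*} {G : SimpleGraph V} (D : GraphDilation G W)
    (e : Sym2 V) : Finset W := by
  classical exact (sym2ToFinset e).biUnion D.vset ∪ D.eset e

/-- The hyperedge set of a dilation. -/
noncomputable def GraphDilation.edges {V W : Type*} [Fintype V] {G : SimpleGraph V}
    (D : GraphDilation G W) : Finset (Finset W) := by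
  classical exact ((Finset.univ : Finset (Sym2 V)).filter (· ∈ G.edgeSet)).image D.hedge


/-! A transversal can be pushed along any map that sends every hyperedge of the target
into some hyperedge of the source, without growing. The support vertices `v ↦ supp v`
send each edge of `G` into its hyperedge, and collapsing each `vset v` to `v` and each
`eset e` to an endpoint of `e` sends each hyperedge into its edge; so τ(H) ≤ τ(G) ≤ τ(H). -/

section Transversal

variable {W V : Type*}

theorem IsTransversal.image [DecidableEq V] {E : Finset (Finset W)} {F : Finset (Finset V)}
    {T : Finset W} (hT : IsTransversal E T) (f : W → V)
    (hf : ∀ e ∈ F, ∃ e' ∈ E, ∀ w ∈ e', f w ∈ e) :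
    IsTransversal F (T.image f) := by
  intro e he
  obtain ⟨e', he', hfe'⟩ := hf e he
  obtain ⟨w, hwT, hwe'⟩ := hT e' he'
  exact ⟨f w, mem_image_of_mem f hwT, hfe' w hwe'⟩

theorem tauH_le_of_map {E : Finset (Finset W)} {F : Finset (Finset V)}
    (hE : ∃ T, IsTransversal E T) (f : W → V)
    (hf : ∀ e ∈ F, ∃ e' ∈ E, ∀ w ∈ e', f w ∈ e) :
    tauH F ≤ tauH E := by
  classical
  obtain ⟨T₀, hT₀⟩ := hE
  obtain ⟨T, hT, hTcard⟩ := Nat.sInf_mem (⟨T₀.card, T₀, hT₀, rfl⟩ :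
    {n | ∃ T : Finset W, IsTransversal E T ∧ T.card = n}.Nonempty)
  calc tauH F ≤ (T.image f).card := Nat.sInf_le ⟨_, hT.image f hf, rfl⟩
    _ ≤ T.card := card_image_le
    _ = tauH E := hTcard

end Transversal

theorem mem_sym2ToFinset {V : Type*} {x : V} {e : Sym2 V} :
    x ∈ sym2ToFinset e ↔ x ∈ e := by
  classical
  induction e using Sym2.inductionOn with
  | hf a b => simp [sym2ToFinset]

theorem mem_graphEdges {V : Type*} [Fintype V] {G : SimpleGraph V} {h : Finset V} :
    h ∈ graphEdges G ↔ ∃ e ∈ G.edgeSet, sym2ToFinset e = h := by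
  classical
  simp [graphEdges]

theorem isTransversal_graphEdges_univ {V : Type*} [Fintype V] (G : SimpleGraph V) :
    IsTransversal (graphEdges G) univ := by
  intro h hh
  obtain ⟨e, -, rfl⟩ := mem_graphEdges.mp hh
  exact ⟨e.out.1, mem_univ _, mem_sym2ToFinset.mpr e.out_fst_mem⟩

namespace GraphDilation

variable {V W : Type*} {G : SimpleGraph V} (D : GraphDilation G W)

theorem mem_hedge {w : W} {e : Sym2 V} :
    w ∈ D.hedge e ↔ (∃ v ∈ e, w ∈ D.vset v) ∨ w ∈ D.eset e := by
  classical
  simp [hedge, mem_sym2ToFinset]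

theorem mem_edges [Fintype V] {h : Finset W} :
    h ∈ D.edges ↔ ∃ e ∈ G.edgeSet, D.hedge e = h := by
  classical
  simp [edges]

theorem supp_mem_hedge {v : V} {e : Sym2 V} (hv : v ∈ e) : D.supp v ∈ D.hedge e :=
  D.mem_hedge.mpr (Or.inl ⟨v, hv, D.supp_mem v⟩)

theorem exists_map_mem_of_mem_hedge :
    ∃ φ : W → V, ∀ e ∈ G.edgeSet, ∀ w ∈ D.hedge e, φ w ∈ e := by
  suffices ∀ w, ∃ v, ∀ e ∈ G.edgeSet, w ∈ D.hedge e → v ∈ e by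
    choose φ hφ using this
    exact ⟨φ, fun e he w hw => hφ w e he hw⟩
  intro w
  rcases D.cover w with ⟨v, hwv⟩ | ⟨e₀, he₀, hwe₀⟩
  · refine ⟨v, fun e he hw => ?_⟩
    rcases D.mem_hedge.mp hw with ⟨u, hue, hwu⟩ | hwe
    · obtain rfl : u = v := by
        by_contra huv
        exact disjoint_left.mp (D.vset_disj huv) hwu hwv
      exact hue
    · exact absurd hwe (disjoint_left.mp (D.vset_eset_disj v he) hwv)
  · refine ⟨e₀.out.1, fun e he hw => ?_⟩
    rcases D.mem_hedge.mp hw with ⟨u, -, hwu⟩ | hwe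
    · exact absurd hwe₀ (disjoint_left.mp (D.vset_eset_disj u he₀) hwu)
    · obtain rfl : e = e₀ := by
        by_contra hee₀
        exact disjoint_left.mp (D.eset_disj he he₀ hee₀) hwe hwe₀
      exact e.out_fst_mem

end GraphDilation

theorem dilation_tau_eq {V W : Type*} [Fintype V] (G : SimpleGraph V)
    (D : GraphDilation G W) :
    tauH D.edges = tauH (graphEdges G) := by
  have supp_maps : ∀ h ∈ D.edges, ∃ e ∈ graphEdges G, ∀ v ∈ e, D.supp v ∈ h := by
    intro h hh
    obtain ⟨e, he, rfl⟩ := D.mem_edges.mp hh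
    exact ⟨sym2ToFinset e, mem_graphEdges.mpr ⟨e, he, rfl⟩,
      fun v hv => D.supp_mem_hedge (mem_sym2ToFinset.mp hv)⟩
  obtain ⟨φ, hφ⟩ := D.exists_map_mem_of_mem_hedge
  have φ_maps : ∀ e ∈ graphEdges G, ∃ h ∈ D.edges, ∀ w ∈ h, φ w ∈ e := by
    intro s hs
    obtain ⟨e, he, rfl⟩ := mem_graphEdges.mp hs
    exact ⟨D.hedge e, D.mem_edges.mpr ⟨e, he, rfl⟩,
      fun w hw => mem_sym2ToFinset.mpr (hφ e he w hw)⟩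
  have hG : ∃ T, IsTransversal (graphEdges G) T := ⟨univ, isTransversal_graphEdges_univ G⟩
  have hD : ∃ T, IsTransversal D.edges T := by
    classical
    exact ⟨_, (isTransversal_graphEdges_univ G).image D.supp supp_maps⟩
  exact le_antisymm (tauH_le_of_map hG D.supp supp_maps) (tauH_le_of_map hD φ φ_maps)
end

section
/- In any graph G without isolated vertices, the domination number is at most the matching number: γ(G) ≤ ν(G). -/
/-!
Take a maximum matching `M`. No edge joins two unmatched vertices, and no edge `xy` of `M` has
`x` and `y` adjacent to two distinct unmatched vertices, as that would be an augmenting path of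
length three. Hence every edge of `M` has an endpoint adjacent to all unmatched neighbours of the
edge, and when `G` has no isolated vertex these `|M|` endpoints dominate `G`.
-/

open Finset

def IsMaxHypMatching {W : Type*} (E M : Finset (Finset W)) : Prop :=
  IsHypMatching E M ∧ ∀ M', IsHypMatching E M' → M'.card ≤ M.card

section Hypergraph

variable {W : Type*} {E M : Finset (Finset W)}

lemma bddAbove_card_isHypMatching (E : Finset (Finset W)) :
    BddAbove {n | ∃ M, IsHypMatching E M ∧ M.card = n} := by
  refine ⟨E.card, ?_⟩
  rintro _ ⟨M, hM, rfl⟩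
  exact card_le_card hM.1

lemma IsHypMatching.card_le_nuH (hM : IsHypMatching E M) : M.card ≤ nuH E :=
  le_csSup (bddAbove_card_isHypMatching E) ⟨M, hM, rfl⟩

lemma exists_isMaxHypMatching_card_eq_nuH (E : Finset (Finset W)) :
    ∃ M, IsMaxHypMatching E M ∧ M.card = nuH E := by
  have hne : {n | ∃ M, IsHypMatching E M ∧ M.card = n}.Nonempty :=
    ⟨0, ∅, ⟨empty_subset E, by simp⟩, rfl⟩
  obtain ⟨M, hM, hcard⟩ := Nat.sSup_mem hne (bddAbove_card_isHypMatching E)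
  exact ⟨M, ⟨hM, fun M' hM' => hcard ▸ hM'.card_le_nuH⟩, hcard⟩

lemma IsHypMatching.mono {M' : Finset (Finset W)} (hM : IsHypMatching E M) (h : M' ⊆ M) :
    IsHypMatching E M' :=
  ⟨h.trans hM.1, fun a ha b hb => hM.2 a (h ha) b (h hb)⟩

variable [DecidableEq W] {e : Finset W}

lemma IsHypMatching.insert (hM : IsHypMatching E M) (he : e ∈ E)
    (hdisj : ∀ m ∈ M, Disjoint e m) : IsHypMatching E (insert e M) := by
  refine ⟨insert_subset he hM.1, ?_⟩
  simp only [mem_insert]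
  rintro a (rfl | ha) b (rfl | hb) hab
  exacts [absurd rfl hab, hdisj b hb, (hdisj a ha).symm, hM.2 a ha b hb hab]

lemma card_insert_of_forall_disjoint (he : e.Nonempty) (hdisj : ∀ m ∈ M, Disjoint e m) :
    (insert e M).card = M.card + 1 :=
  card_insert_of_notMem fun heM => he.ne_empty (disjoint_self.1 (hdisj e heM))

lemma IsMaxHypMatching.exists_not_disjoint (hM : IsMaxHypMatching E M) (he : e ∈ E)
    (hne : e.Nonempty) : ∃ m ∈ M, ¬Disjoint e m := by
  by_contra! hdisj
  have := hM.2 _ (hM.1.insert he hdisj)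
  rw [card_insert_of_forall_disjoint hne hdisj] at this
  omega

lemma IsMaxHypMatching.not_exchange (hM : IsMaxHypMatching E M) {m e₁ e₂ : Finset W}
    (hm : m ∈ M) (he₁ : e₁ ∈ E) (he₂ : e₂ ∈ E) (hne₁ : e₁.Nonempty) (hne₂ : e₂.Nonempty)
    (h₁₂ : Disjoint e₁ e₂) (h₁ : ∀ m' ∈ M, m' ≠ m → Disjoint e₁ m')
    (h₂ : ∀ m' ∈ M, m' ≠ m → Disjoint e₂ m') : False := by
  have h₂' : ∀ m' ∈ M.erase m, Disjoint e₂ m' := fun m' hm' => h₂ m' (mem_of_mem_erase hm')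
    (ne_of_mem_erase hm')
  have h₁' : ∀ m' ∈ insert e₂ (M.erase m), Disjoint e₁ m' := by
    simp only [mem_insert, mem_erase]
    rintro m' (rfl | ⟨hne, hm'⟩)
    exacts [h₁₂, h₁ m' hm' hne]
  have hmatch := ((hM.1.mono (erase_subset m M)).insert he₂ h₂').insert he₁ h₁'
  have := hM.2 _ hmatch
  rw [card_insert_of_forall_disjoint hne₁ h₁', card_insert_of_forall_disjoint hne₂ h₂',
    card_erase_of_mem hm] at this
  have := card_pos.2 ⟨m, hm⟩
  omega

end Hypergraph

section Graph

lemma sym2ToFinset_mk {V : Type*} [DecidableEq V] (a b : V) : sym2ToFinset s(a, b) = {a, b} := by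
  rw [sym2ToFinset, Sym2.lift_mk]
  ext
  simp

variable {V : Type*} [Fintype V] {G : SimpleGraph V}

lemma IsDominatingG.gammaG_le {D : Finset V} (hD : IsDominatingG G D) : gammaG G ≤ D.card :=
  Nat.sInf_le ⟨D, hD, rfl⟩

variable [DecidableEq V]

lemma mem_graphEdges_s13 {m : Finset V} : m ∈ graphEdges G ↔ ∃ a b, G.Adj a b ∧ m = {a, b} := by
  simp only [graphEdges, mem_image, mem_filter, mem_univ, true_and]
  constructor
  · rintro ⟨e, he, rfl⟩
    induction e using Sym2.ind with
    | _ a b => exact ⟨a, b, he, sym2ToFinset_mk a b⟩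
  · rintro ⟨a, b, hab, rfl⟩
    exact ⟨s(a, b), hab, sym2ToFinset_mk a b⟩

lemma pair_mem_graphEdges {a b : V} (h : G.Adj a b) : {a, b} ∈ graphEdges G :=
  mem_graphEdges_s13.2 ⟨a, b, h, rfl⟩

lemma adj_of_mem_graphEdges {m : Finset V} (hm : m ∈ graphEdges G) {x y : V} (hx : x ∈ m)
    (hy : y ∈ m) (hxy : x ≠ y) : G.Adj x y := by
  obtain ⟨a, b, hab, rfl⟩ := mem_graphEdges_s13.1 hm
  simp only [mem_insert, mem_singleton] at hx hy
  rcases hx with rfl | rfl <;> rcases hy with rfl | rfl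
  exacts [absurd rfl hxy, hab, hab.symm, absurd rfl hxy]

variable {M : Finset (Finset V)}

lemma IsMaxHypMatching.exists_mem_of_adj (hM : IsMaxHypMatching (graphEdges G) M) {a b : V}
    (hab : G.Adj a b) : ∃ m ∈ M, a ∈ m ∨ b ∈ m := by
  obtain ⟨m, hm, hdisj⟩ := hM.exists_not_disjoint (pair_mem_graphEdges hab) (insert_nonempty _ _)
  exact ⟨m, hm, by simpa [disjoint_insert_left, or_iff_not_imp_left] using hdisj⟩

lemma IsMaxHypMatching.not_augmenting_path (hM : IsMaxHypMatching (graphEdges G) M)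
    {m : Finset V} (hm : m ∈ M) {x y a b : V} (hx : x ∈ m) (hy : y ∈ m) (hxy : x ≠ y)
    (ha : ∀ m' ∈ M, a ∉ m') (hb : ∀ m' ∈ M, b ∉ m') (hab : a ≠ b)
    (hax : G.Adj a x) (hby : G.Adj b y) : False := by
  have hmdisj : ∀ m' ∈ M, m' ≠ m → ∀ z ∈ m, z ∉ m' := fun m' hm' hne z hz hz' =>
    disjoint_left.1 (hM.1.2 m' hm' m hm hne) hz' hz
  refine hM.not_exchange hm (pair_mem_graphEdges hax) (pair_mem_graphEdges hby)
    (insert_nonempty _ _) (insert_nonempty _ _) ?_ ?_ ?_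
  · have hay : a ≠ y := fun h => ha m hm (h ▸ hy)
    have hxb : x ≠ b := fun h => hb m hm (h ▸ hx)
    simp [hab.symm, hay.symm, hxb.symm, hxy.symm]
  · intro m' hm' hne
    simp [disjoint_insert_left, ha m' hm', hmdisj m' hm' hne x hx]
  · intro m' hm' hne
    simp [disjoint_insert_left, hb m' hm', hmdisj m' hm' hne y hy]

lemma IsMaxHypMatching.exists_adj_of_adj_unmatched (hM : IsMaxHypMatching (graphEdges G) M)
    {m : Finset V} (hm : m ∈ M) :
    ∃ z ∈ m, ∀ v, (∀ m' ∈ M, v ∉ m') → ∀ u ∈ m, G.Adj u v → G.Adj z v := by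
  by_cases h : ∃ x ∈ m, ∃ b, (∀ m' ∈ M, b ∉ m') ∧ G.Adj x b
  · obtain ⟨x, hx, b, hb, hxb⟩ := h
    refine ⟨x, hx, fun v hv u hu huv => ?_⟩
    by_cases hux : u = x
    · exact hux ▸ huv
    by_cases hvb : v = b
    · exact hvb ▸ hxb
    exact (hM.not_augmenting_path hm hu hx hux hv hb hvb huv.symm hxb.symm).elim
  · obtain ⟨a, b, _, rfl⟩ := mem_graphEdges_s13.1 (hM.1.1 hm)
    exact ⟨a, mem_insert_self a _, fun v hv u hu huv => (h ⟨u, hu, v, hv, huv⟩).elim⟩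

/-- Every neighbour of an unmatched vertex is matched, so the endpoints chosen by
`exists_adj_of_adj_unmatched` dominate. -/
lemma IsMaxHypMatching.exists_isDominatingG (hiso : ∀ v : V, ∃ u : V, G.Adj v u)
    (hM : IsMaxHypMatching (graphEdges G) M) : ∃ D, IsDominatingG G D ∧ D.card ≤ M.card := by
  choose pick hpick_mem hpick_adj using fun m (hm : m ∈ M) => hM.exists_adj_of_adj_unmatched hm
  let D := M.attach.image fun m => pick m.1 m.2
  refine ⟨D, fun v hv => ?_, card_image_le.trans_eq card_attach⟩
  have hpickD : ∀ m (hm : m ∈ M), pick m hm ∈ D := fun m hm =>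
    mem_image_of_mem _ (mem_attach M ⟨m, hm⟩)
  by_cases hvM : ∃ m ∈ M, v ∈ m
  · obtain ⟨m, hm, hvm⟩ := hvM
    have hne : pick m hm ≠ v := fun h => hv (h ▸ hpickD m hm)
    exact ⟨pick m hm, hpickD m hm, adj_of_mem_graphEdges (hM.1.1 hm) (hpick_mem m hm) hvm hne⟩
  push Not at hvM
  obtain ⟨u, hvu⟩ := hiso v
  obtain ⟨m, hm, hvm | hum⟩ := hM.exists_mem_of_adj hvu
  · exact absurd hvm (hvM m hm)
  · exact ⟨pick m hm, hpickD m hm, hpick_adj m hm v hvM u hum hvu.symm⟩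

end Graph

theorem graph_gamma_le_nu {V : Type*} [Fintype V] (G : SimpleGraph V)
    (hiso : ∀ v : V, ∃ u : V, G.Adj v u) :
    gammaG G ≤ nuH (graphEdges G) := by
  classical
  obtain ⟨M, hM, hcard⟩ := exists_isMaxHypMatching_card_eq_nuH (graphEdges G)
  obtain ⟨D, hD, hDcard⟩ := hM.exists_isDominatingG hiso
  exact hcard ▸ hD.gammaG_le.trans hDcard
end
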